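/- In BS(1,2), the element t^n a² t^{-n} equals a^{2^{n+1}}, and the word t^n a² t^{-n} (of length 2n+2) is a geodesic; in particular the distance from the identity to a^{2^{n+1}} in the word metric on BS(1,2) is exactly 2n+2. -/

import Mathlib

def bsRel (q : ℤ) : Set (FreeGroup Bool) :=
  {FreeGroup.of true * FreeGroup.of false * (FreeGroup.of true)⁻¹ *
    (FreeGroup.of false ^ q)⁻¹}

abbrev BS (q : ℤ) := PresentedGroup (bsRel q)

def bsA (q : ℤ) : BS q := PresentedGroup.of false

def bsT (q : ℤ) : BS q := PresentedGroup.of true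

def evalWord (q : ℤ) (w : List (Bool × Bool)) : BS q :=
  PresentedGroup.mk (bsRel q) (FreeGroup.mk w)

/-- The word `t^n a² t^(-n)` over `{a,a⁻¹,t,t⁻¹}`. -/
def wWord (n : ℕ) : List (Bool × Bool) :=
  List.replicate n (true, true) ++ List.replicate 2 (false, true) ++
    List.replicate n (true, false)

/-!
`BS(1,2)` acts on `ℚ` by `t : y ↦ 2y` and `a : y ↦ y + 1`. Reading a word from the left while
tracking the height `h` (the `t`-exponent of the prefix read so far), the word acts as
`y ↦ 2^e y + Σ ±2^h`, where `e` is the final height and each letter `a^{±1}` read at height `h`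
contributes `±2^h`. If the word represents `a^N`, then `e = 0` and the sum is `N`. With `M` the
maximal height, `N ≤ #(a-letters) · 2^M`, while climbing to height `M` and coming back to `0`
costs `2M` letters `t^{±1}`. So if `2^k ≤ N`, the length is at least `2M + 2^(k-M) ≥ 2k` when
`M < k`, and at least `2M` otherwise.
-/

theorem pow_mul_mul_inv_pow_eq_pow_pow {G : Type*} [Group G] {a t : G} {q : ℕ}
    (h : t * a * t⁻¹ = a ^ q) (n : ℕ) : t ^ n * a * t⁻¹ ^ n = a ^ q ^ n := by
  induction n with
  | zero => simp
  | succ n ih =>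
    calc t ^ (n + 1) * a * t⁻¹ ^ (n + 1) = t * (t ^ n * a * t⁻¹ ^ n) * t⁻¹ := by group
      _ = (t * a * t⁻¹) ^ q ^ n := by rw [ih, conj_pow]
      _ = a ^ q ^ (n + 1) := by rw [h, ← pow_mul, pow_succ']

theorem two_mul_le_add_of_two_pow_le {k M A T : ℕ} (hA : 2 ^ k ≤ A * 2 ^ M) (hT : 2 * M ≤ T) :
    2 * k ≤ A + T := by
  rcases le_total k M with hkM | hMk
  · omega
  · obtain ⟨j, rfl⟩ := Nat.exists_eq_add_of_le hMk
    have hA' : 2 ^ j ≤ A := by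
      rw [pow_add, mul_comm] at hA
      exact Nat.le_of_mul_le_mul_right hA (by positivity)
    have hj : 2 * j ≤ 2 ^ j := by
      cases j with
      | zero => simp
      | succ i => have := Nat.lt_two_pow_self (n := i); rw [pow_succ]; omega
    omega

theorem bsT_mul_bsA_mul_inv (q : ℤ) : bsT q * bsA q * (bsT q)⁻¹ = bsA q ^ q := by
  have := PresentedGroup.one_of_mem (rels := bsRel q) rfl
  simp only [map_mul, map_inv, map_zpow, mul_inv_eq_one] at this
  exact this

theorem bsT_pow_mul_bsA_sq_mul_inv_pow (n : ℕ) :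
    bsT 2 ^ n * bsA 2 ^ 2 * (bsT 2)⁻¹ ^ n = bsA 2 ^ 2 ^ (n + 1) := by
  have h : bsT 2 * bsA 2 * (bsT 2)⁻¹ = bsA 2 ^ 2 := bsT_mul_bsA_mul_inv 2
  calc bsT 2 ^ n * bsA 2 ^ 2 * (bsT 2)⁻¹ ^ n = (bsT 2 ^ n * bsA 2 * (bsT 2)⁻¹ ^ n) ^ 2 := by
        rw [inv_pow, conj_pow]
    _ = bsA 2 ^ 2 ^ (n + 1) := by rw [pow_mul_mul_inv_pow_eq_pow_pow h, ← pow_mul, pow_succ]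

theorem evalWord_eq_prod (q : ℤ) (v : List (Bool × Bool)) :
    evalWord q v =
      (v.map fun x => cond x.2 (PresentedGroup.of x.1) (PresentedGroup.of x.1)⁻¹).prod := by
  rw [evalWord, ← FreeGroup.lift_of_apply (FreeGroup.mk v), FreeGroup.lift_mk, map_list_prod,
    List.map_map]
  congr 1
  refine List.map_congr_left ?_
  rintro ⟨x, _ | _⟩ _ <;> rfl

theorem evalWord_wWord (q : ℤ) (n : ℕ) :
    evalWord q (wWord n) = bsT q ^ n * bsA q ^ 2 * (bsT q)⁻¹ ^ n := by
  simp [evalWord_eq_prod, wWord, bsT, bsA, pow_two, mul_assoc]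

namespace BSWord

-- A letter `(true, s)` is `t^{±1}` and `(false, s)` is `a^{±1}`, with exponent `+1` iff `s`.
def tExp : Bool × Bool → ℤ
  | (true, s) => cond s 1 (-1)
  | (false, _) => 0

def aExp : Bool × Bool → ℚ
  | (true, _) => 0
  | (false, s) => cond s 1 (-1)

def endHeight (h : ℤ) : List (Bool × Bool) → ℤ
  | [] => h
  | x :: v => endHeight (h + tExp x) v

def maxHeight (h : ℤ) : List (Bool × Bool) → ℤ
  | [] => h
  | x :: v => max h (maxHeight (h + tExp x) v)

def aValue (h : ℤ) : List (Bool × Bool) → ℚ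
  | [] => 0
  | x :: v => aExp x * 2 ^ h + aValue (h + tExp x) v

theorem le_maxHeight (h : ℤ) : ∀ v, h ≤ maxHeight h v
  | [] => le_rfl
  | _ :: _ => le_max_left _ _

theorem abs_aValue_le (h : ℤ) (v : List (Bool × Bool)) :
    |aValue h v| ≤ v.countP (fun x => !x.1) * 2 ^ maxHeight h v := by
  induction v generalizing h with
  | nil => simp [aValue]
  | cons x v ih =>
    have hx : |aExp x| ≤ if !x.1 then 1 else 0 := by
      rcases x with ⟨_ | _, _ | _⟩ <;> simp [aExp]
    have hh : (2 : ℚ) ^ h ≤ 2 ^ maxHeight h (x :: v) :=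
      zpow_le_zpow_right₀ one_le_two (le_max_left _ _)
    have hv : (2 : ℚ) ^ maxHeight (h + tExp x) v ≤ 2 ^ maxHeight h (x :: v) :=
      zpow_le_zpow_right₀ one_le_two (le_max_right _ _)
    calc |aValue h (x :: v)| ≤ |aExp x| * 2 ^ h + |aValue (h + tExp x) v| := by
          simpa [aValue, abs_mul] using abs_add_le (aExp x * 2 ^ h) (aValue (h + tExp x) v)
      _ ≤ (if !x.1 then 1 else 0) * 2 ^ maxHeight h (x :: v)
          + v.countP (fun x => !x.1) * 2 ^ maxHeight h (x :: v) := by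
          gcongr
          exact (ih _).trans (by gcongr)
      _ = (x :: v).countP (fun x => !x.1) * 2 ^ maxHeight h (x :: v) := by
          rw [List.countP_cons]; push_cast; ring

theorem maxHeight_sub_add_maxHeight_sub_le (h : ℤ) (v : List (Bool × Bool)) :
    maxHeight h v - h + (maxHeight h v - endHeight h v) ≤ v.countP (·.1) := by
  induction v generalizing h with
  | nil => simp [maxHeight, endHeight]
  | cons x v ih =>
    have ih' := ih (h + tExp x)
    have hle := le_maxHeight (h + tExp x) v
    rcases x with ⟨_ | _, _ | _⟩ <;>
      simp only [maxHeight, endHeight, tExp, cond_true, cond_false, List.countP_cons] at * <;>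
      push_cast at * <;> omega

end BSWord

open BSWord

def affineGen : Bool → Equiv.Perm ℚ
  | true => Equiv.mulLeft₀ 2 two_ne_zero
  | false => Equiv.addRight 1

theorem lift_affineGen_eq_one_of_mem_bsRel : ∀ r ∈ bsRel 2, FreeGroup.lift affineGen r = 1 := by
  rintro _ rfl
  ext y
  simp [affineGen, Equiv.Perm.inv_def, mul_add]

def bs12ToPerm : BS 2 →* Equiv.Perm ℚ :=
  PresentedGroup.toGroup lift_affineGen_eq_one_of_mem_bsRel

theorem cond_affineGen_apply (x : Bool × Bool) (y : ℚ) :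
    cond x.2 (affineGen x.1) (affineGen x.1)⁻¹ y = 2 ^ tExp x * y + aExp x := by
  rcases x with ⟨_ | _, _ | _⟩ <;> simp [affineGen, tExp, aExp, Equiv.Perm.inv_def]

theorem mul_prod_cond_affineGen_apply (v : List (Bool × Bool)) (h : ℤ) (c : ℚ)
    (g : Equiv.Perm ℚ) (hg : ∀ y, g y = 2 ^ h * y + c) (y : ℚ) :
    (g * (v.map fun x => cond x.2 (affineGen x.1) (affineGen x.1)⁻¹).prod) y =
      2 ^ endHeight h v * y + (c + aValue h v) := by
  induction v generalizing h c g with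
  | nil => simp [hg, endHeight, aValue]
  | cons x v ih =>
    have hx (y : ℚ) : (g * cond x.2 (affineGen x.1) (affineGen x.1)⁻¹) y =
        2 ^ (h + tExp x) * y + (c + aExp x * 2 ^ h) := by
      rw [Equiv.Perm.mul_apply, cond_affineGen_apply, hg, zpow_add₀ two_ne_zero]
      ring
    rw [List.map_cons, List.prod_cons, ← mul_assoc, ih _ _ _ hx, endHeight, aValue, add_assoc]

theorem bs12ToPerm_evalWord_apply (v : List (Bool × Bool)) (y : ℚ) :
    bs12ToPerm (evalWord 2 v) y = 2 ^ endHeight 0 v * y + aValue 0 v := by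
  have : bs12ToPerm (evalWord 2 v) = FreeGroup.lift affineGen (FreeGroup.mk v) := rfl
  rw [this, FreeGroup.lift_mk]
  simpa using mul_prod_cond_affineGen_apply v 0 0 1 (by simp) y

theorem bs12ToPerm_bsA_pow_apply (N : ℕ) (y : ℚ) : bs12ToPerm (bsA 2 ^ N) y = y + N := by
  rw [map_pow, bsA, bs12ToPerm, PresentedGroup.toGroup.of]
  simp [affineGen]

theorem two_mul_le_length_of_evalWord_eq_bsA_pow {k N : ℕ} (hN : 2 ^ k ≤ N)
    {v : List (Bool × Bool)} (hv : evalWord 2 v = bsA 2 ^ N) : 2 * k ≤ v.length := by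
  have hy (y : ℚ) : 2 ^ endHeight 0 v * y + aValue 0 v = y + N := by
    rw [← bs12ToPerm_evalWord_apply, hv, bs12ToPerm_bsA_pow_apply]
  have hval : aValue 0 v = N := by simpa using hy 0
  have hend : endHeight 0 v = 0 := by
    have := hy 1
    rwa [hval, mul_one, add_left_inj, zpow_eq_one_iff_right₀ zero_le_two (by norm_num)] at this
  obtain ⟨M, hM⟩ := Int.eq_ofNat_of_zero_le (le_maxHeight 0 v)
  rw [List.length_eq_countP_add_countP (·.1), add_comm]
  refine two_mul_le_add_of_two_pow_le (M := M) ?_ ?_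
  · have := abs_aValue_le 0 v
    rw [hval, hM, zpow_natCast, abs_of_nonneg (Nat.cast_nonneg _)] at this
    have : N ≤ v.countP (fun x => !x.1) * 2 ^ M := by exact_mod_cast this
    simpa using hN.trans this
  · have := maxHeight_sub_add_maxHeight_sub_le 0 v
    rw [hend, hM] at this
    omega

/-- In `BS(1,2)`, `t^n a² t^(-n) = a^(2^(n+1))`, the word `t^n a² t^(-n)`
(of length `2n+2`) is geodesic, and hence the distance from the identity to
`a^(2^(n+1))` is exactly `2n+2`. -/
theorem bs12_w_geodesic (n : ℕ) :
    (bsT 2) ^ n * (bsA 2) ^ 2 * ((bsT 2)⁻¹) ^ n = (bsA 2) ^ (2 ^ (n + 1)) ∧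
    evalWord 2 (wWord n) = (bsA 2) ^ (2 ^ (n + 1)) ∧
    (wWord n).length = 2 * n + 2 ∧
    (∀ v : List (Bool × Bool), evalWord 2 v = (bsA 2) ^ (2 ^ (n + 1)) →
      2 * n + 2 ≤ v.length) := by
  have hconj := bsT_pow_mul_bsA_sq_mul_inv_pow n
  refine ⟨hconj, (evalWord_wWord 2 n).trans hconj, ?_, fun v hv => ?_⟩
  · simp only [wWord, List.length_append, List.length_replicate]
    ring
  · have := two_mul_le_length_of_evalWord_eq_bsA_pow le_rfl hv
    omega
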